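/- arXiv:1603.09205 — 7 statements merged into one kernel-verified Lean document; each statement's English description precedes it below -/
import Mathlib

section
/- (Reciprocal pointer chain theorem) For any two vertices u, v ∈ V, the cascading via-paths p̃_{s,u,t} and p̃_{s,v,t} are equal if and only if u and v are connected by a reciprocal pointer chain, i.e., there exists an RPC whose first vertex is one of u, v and whose last vertex is the other. -/
variable {V : Type*}

/-- `p` is a path from `u` to `w` in the digraph with edge relation `E`:
a nonempty finite sequence of vertices beginning at `u` and ending at `w`
in which every consecutive pair of vertices is an edge. -/
def IsPath (E : V → V → Prop) (p : List V) (u w : V) : Prop :=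
  p ≠ [] ∧ p.head? = some u ∧ p.getLast? = some w ∧ p.Chain' E

/-- The cost of a path: the sum of the weights of its edges. -/
def pathCost (c : V → V → ℝ) (p : List V) : ℝ :=
  ((p.zip p.tail).map fun e => c e.1 e.2).sum

/-- A shortest path from `u` to `w`: a path from `u` to `w` of minimum cost. -/
def IsShortestPath (E : V → V → Prop) (c : V → V → ℝ) (p : List V) (u w : V) : Prop :=
  IsPath E p u w ∧ ∀ q, IsPath E q u w → pathCost c p ≤ pathCost c q

/-- A via-path for `v`: an `s`–`t` path of minimum cost among all `s`–`t`
paths passing through `v`. -/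
def IsViaPath (E : V → V → Prop) (c : V → V → ℝ) (s t v : V) (p : List V) : Prop :=
  IsPath E p s t ∧ v ∈ p ∧ ∀ q, IsPath E q s t → v ∈ q → pathCost c p ≤ pathCost c q

/-- The minimum cost of an `s`–`t` path passing through `v`. -/
noncomputable def viaCost (E : V → V → Prop) (c : V → V → ℝ) (s t v : V) : ℝ :=
  sInf (pathCost c '' {p | IsPath E p s t ∧ v ∈ p})

/-- A predecessor shortest path tree rooted at the source `s`: a map `b`
assigning to each vertex `v ≠ s` a vertex `b v` with an edge from `b v` to `v`,
such that iterating `b` from any `v` terminates at `s` and the resulting path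
`pathTo v` (read from `s` to `v`) is a shortest path from `s` to `v`. -/
structure PredSPT (E : V → V → Prop) (c : V → V → ℝ) (s : V) where
  b : V → V
  pathTo : V → List V
  edge : ∀ v, v ≠ s → E (b v) v
  pathTo_src : pathTo s = [s]
  pathTo_step : ∀ v, v ≠ s → pathTo v = pathTo (b v) ++ [v]
  shortest : ∀ v, IsShortestPath E c (pathTo v) s v

/-- A successor shortest path tree rooted at the target `t`: a map `f`
assigning to each vertex `v ≠ t` a vertex `f v` with an edge from `v` to `f v`,
such that iterating `f` from any `v` terminates at `t` and the resulting path
`pathFrom v` is a shortest path from `v` to `t`. -/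
structure SuccSPT (E : V → V → Prop) (c : V → V → ℝ) (t : V) where
  f : V → V
  pathFrom : V → List V
  edge : ∀ v, v ≠ t → E v (f v)
  pathFrom_tgt : pathFrom t = [t]
  pathFrom_step : ∀ v, v ≠ t → pathFrom v = v :: pathFrom (f v)
  shortest : ∀ v, IsShortestPath E c (pathFrom v) v t

variable {E : V → V → Prop} {c : V → V → ℝ} {s t : V}

/-- The cascading via-path (CVP) of a vertex `v`: the tree path `p̃_{s,v}`
followed by the tree path `p̃_{v,t}`. -/
def CVP (B : PredSPT E c s) (F : SuccSPT E c t) (v : V) : List V :=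
  B.pathTo v ++ (F.pathFrom v).tail

/-- A reciprocal pointer chain (RPC): a nonempty sequence of vertices
`(v_1, …, v_n)` such that for all `1 ≤ i < n`, `b (v_{i+1}) = v_i` and
`f (v_i) = v_{i+1}` (as pointers of the two shortest path trees, so in
particular `v_{i+1} ≠ s` and `v_i ≠ t`). -/
def IsRPC (B : PredSPT E c s) (F : SuccSPT E c t) (r : List V) : Prop :=
  r ≠ [] ∧ r.Chain' fun x y => y ≠ s ∧ x ≠ t ∧ B.b y = x ∧ F.f x = y

/-- A maximal RPC: an RPC whose set of vertices is not a (strict) subset of the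
vertex set of any other RPC. -/
def IsMaximalRPC [DecidableEq V] (B : PredSPT E c s) (F : SuccSPT E c t)
    (r : List V) : Prop :=
  IsRPC B F r ∧
    ∀ r', IsRPC B F r' → r.toFinset ⊆ r'.toFinset → r'.toFinset = r.toFinset

/-- The Jaccard distance between the vertex sets of two paths. -/
noncomputable def jaccardDist [DecidableEq V] (p q : List V) : ℝ :=
  1 - ((p.toFinset ∩ q.toFinset).card : ℝ) / ((p.toFinset ∪ q.toFinset).card : ℝ)

/-- A plateau: a nonempty sequence of vertices in which every consecutive pair
is an edge and all vertices have the same minimum via-path cost. -/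
def IsPlateau (E : V → V → Prop) (c : V → V → ℝ) (s t : V) (q : List V) : Prop :=
  q ≠ [] ∧ q.Chain' fun x y => E x y ∧ viaCost E c s t x = viaCost E c s t y

/-- A maximal plateau: a plateau whose set of vertices is not a (strict) subset
of the vertex set of any other plateau. -/
def IsMaximalPlateau [DecidableEq V] (E : V → V → Prop) (c : V → V → ℝ)
    (s t : V) (q : List V) : Prop :=
  IsPlateau E c s t q ∧
    ∀ q', IsPlateau E c s t q' → q.toFinset ⊆ q'.toFinset → q'.toFinset = q.toFinset

/-! Let `u` lie no further along the common CVP `L` than `v`. The stretch of `L` from `u` to `v`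
is at once a suffix of the tree path `p̃_{s,v}` and a prefix of `p̃_{u,t}`, so consecutive
vertices on it are linked both by `b` and by `f`: it is an RPC. Conversely, a reciprocal step
`x → y` leaves the CVP unchanged, because `p̃_{s,y} = p̃_{s,x} y` and `p̃_{x,t} = x p̃_{y,t}`. -/

theorem List.IsChain.and {α : Type*} {R S : α → α → Prop} {l : List α}
    (hR : l.IsChain R) (hS : l.IsChain S) : l.IsChain fun x y => R x y ∧ S x y :=
  List.isChain_iff_getElem.mpr fun i hi =>
    ⟨List.isChain_iff_getElem.mp hR i hi, List.isChain_iff_getElem.mp hS i hi⟩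

namespace PredSPT

variable (B : PredSPT E c s)

theorem exists_pathTo_eq_append (v : V) : ∃ p, B.pathTo v = p ++ [v] :=
  List.getLast?_eq_some_iff.mp (B.shortest v).1.2.2.1

theorem isChain_pathTo (v : V) : (B.pathTo v).IsChain fun x y => y ≠ s ∧ B.b y = x := by
  generalize hn : (B.pathTo v).length = n
  induction n generalizing v with
  | zero => simp [List.length_eq_zero_iff.mp hn]
  | succ n ih =>
    by_cases hv : v = s
    · simp [hv, B.pathTo_src]
    rw [B.pathTo_step v hv] at hn ⊢
    obtain ⟨p, hp⟩ := B.exists_pathTo_eq_append (B.b v)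
    refine (ih (B.b v) (by simpa using hn)).append (.singleton v) ?_
    simp [hp, hv]

end PredSPT

namespace SuccSPT

variable (F : SuccSPT E c t)

theorem exists_pathFrom_eq_cons (v : V) : ∃ q, F.pathFrom v = v :: q :=
  List.head?_eq_some_iff.mp (F.shortest v).1.2.1

theorem isChain_pathFrom (v : V) : (F.pathFrom v).IsChain fun x y => x ≠ t ∧ F.f x = y := by
  generalize hn : (F.pathFrom v).length = n
  induction n generalizing v with
  | zero => simp [List.length_eq_zero_iff.mp hn]
  | succ n ih =>
    by_cases hv : v = t
    · simp [hv, F.pathFrom_tgt]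
    rw [F.pathFrom_step v hv] at hn ⊢
    obtain ⟨q, hq⟩ := F.exists_pathFrom_eq_cons (F.f v)
    refine List.isChain_cons.mpr ⟨?_, ih (F.f v) (by simpa using hn)⟩
    simp [hq, hv]

end SuccSPT

section CVP

variable {B : PredSPT E c s} {F : SuccSPT E c t}

theorem cvp_eq_append_cons {v : V} {p q : List V} (hp : B.pathTo v = p ++ [v])
    (hq : F.pathFrom v = v :: q) : CVP B F v = p ++ v :: q := by
  simp [CVP, hp, hq]

theorem cvp_eq_of_b_eq_of_f_eq {x y : V} (hy : y ≠ s) (hx : x ≠ t) (hb : B.b y = x)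
    (hf : F.f x = y) : CVP B F x = CVP B F y := by
  obtain ⟨q, hq⟩ := F.exists_pathFrom_eq_cons y
  simp [CVP, F.pathFrom_step x hx, B.pathTo_step y hy, hb, hf, hq]

theorem cvp_eq_of_isRPC {r : List V} {u v : V} (hr : IsRPC B F r) (hu : r.head? = some u)
    (hv : r.getLast? = some v) : CVP B F u = CVP B F v := by
  obtain ⟨l, rfl⟩ := List.head?_eq_some_iff.mp hu
  refine hr.2.induction (CVP B F u = CVP B F ·) _ ?_ (fun _ => rfl) v (List.mem_of_getLast? hv)
  rintro x y ⟨hy, hx, hb, hf⟩ hux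
  exact hux.trans (cvp_eq_of_b_eq_of_f_eq hy hx hb hf)

theorem exists_isRPC_of_cvp_eq {u v : V} (h : CVP B F u = CVP B F v)
    (hle : (B.pathTo u).length ≤ (B.pathTo v).length) :
    ∃ r, IsRPC B F r ∧ r.head? = some u ∧ r.getLast? = some v := by
  obtain ⟨pu, hpu⟩ := B.exists_pathTo_eq_append u
  obtain ⟨qu, hqu⟩ := F.exists_pathFrom_eq_cons u
  obtain ⟨pv, hpv⟩ := B.exists_pathTo_eq_append v
  obtain ⟨qv, hqv⟩ := F.exists_pathFrom_eq_cons v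
  have hL : pu ++ u :: qu = pv ++ v :: qv := by
    rw [← cvp_eq_append_cons hpu hqu, h, cvp_eq_append_cons hpv hqv]
  rw [hpu, hpv] at hle
  simp only [List.length_append, List.length_singleton, add_le_add_iff_right] at hle
  set r := (B.pathTo v).drop pu.length with hr
  have hr_suffix : r = pv.drop pu.length ++ [v] := by
    rw [hr, hpv, List.drop_append_of_le_length hle]
  have hr_prefix : r = (F.pathFrom u).take (pv.length + 1 - pu.length) := by
    have : pv ++ [v] = (pv ++ v :: qv).take (pv.length + 1) := by
      rw [List.take_length_add_append]; rfl
    rw [hr, hpv, this, ← hL, List.drop_take, hqu, List.drop_left]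
  refine ⟨r, ⟨?_, ?_⟩, ?_, ?_⟩
  · simp [hr_suffix]
  · have hB : r.IsChain fun x y => y ≠ s ∧ B.b y = x := (B.isChain_pathTo v).drop _
    have hF : r.IsChain fun x y => x ≠ t ∧ F.f x = y := hr_prefix ▸ (F.isChain_pathFrom u).take _
    exact (hB.and hF).imp fun _ _ ⟨⟨hy, hb⟩, hx, hf⟩ => ⟨hy, hx, hb, hf⟩
  · rw [hr_prefix, hqu, List.head?_take, if_neg (by omega), List.head?_cons]
  · simp [hr_suffix]

end CVP

theorem reciprocal_pointer_chain_theorem_general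
    {E : V → V → Prop} {c : V → V → ℝ} {s t : V}
    (B : PredSPT E c s) (F : SuccSPT E c t) (u v : V) :
    CVP B F u = CVP B F v ↔
      ∃ r, IsRPC B F r ∧
        ((r.head? = some u ∧ r.getLast? = some v) ∨
         (r.head? = some v ∧ r.getLast? = some u)) := by
  constructor
  · intro h
    rcases le_total (B.pathTo u).length (B.pathTo v).length with hle | hle
    · obtain ⟨r, hr, hu, hv⟩ := exists_isRPC_of_cvp_eq h hle
      exact ⟨r, hr, .inl ⟨hu, hv⟩⟩
    · obtain ⟨r, hr, hv, hu⟩ := exists_isRPC_of_cvp_eq h.symm hle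
      exact ⟨r, hr, .inr ⟨hv, hu⟩⟩
  · rintro ⟨r, hr, ⟨hu, hv⟩ | ⟨hv, hu⟩⟩
    · exact cvp_eq_of_isRPC hr hu hv
    · exact (cvp_eq_of_isRPC hr hv hu).symm

/-- Reciprocal pointer chain theorem: the CVPs of `u` and `v` are
equal if and only if `u` and `v` are connected by a reciprocal pointer chain,
i.e., there is an RPC whose first vertex is one of `u, v` and whose last vertex
is the other. -/
theorem reciprocal_pointer_chain_theorem [Fintype V] [DecidableEq V]
    {E : V → V → Prop} {c : V → V → ℝ} {s t : V}
    (hc : ∀ u w, E u w → 0 ≤ c u w)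
    (B : PredSPT E c s) (F : SuccSPT E c t) (u v : V) :
    CVP B F u = CVP B F v ↔
      ∃ r, IsRPC B F r ∧
        ((r.head? = some u ∧ r.getLast? = some v) ∨
         (r.head? = some v ∧ r.getLast? = some u)) :=
  reciprocal_pointer_chain_theorem_general B F u v
end

section
/- If (v_1,…,v_n) is a reciprocal pointer chain, then the sequence (v_1,…,v_n) is itself a path in G from v_1 to v_n, and it is a shortest path from v_1 to v_n. -/
variable {V : Type*}

variable {E : V → V → Prop} {c : V → V → ℝ} {s t : V}

/-!
Following the successor pointers from `v₁` runs along the chain, since `f vᵢ = vᵢ₊₁`; so the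
tree path `p̃_{v₁,t}` is the chain followed by `p̃_{vₙ,t}`. A prefix of a shortest path is a
shortest path, because replacing the prefix by a cheaper path to `vₙ` would give a cheaper path
to `t`.
-/

@[simp]
lemma pathCost_cons_cons (c : V → V → ℝ) (a b : V) (l : List V) :
    pathCost c (a :: b :: l) = c a b + pathCost c (b :: l) := by
  simp [pathCost]

lemma pathCost_append (c : V → V → ℝ) {p : List V} {w : V} (hp : p.getLast? = some w)
    (l : List V) : pathCost c (p ++ l) = pathCost c p + pathCost c (w :: l) := by
  induction p with
  | nil => simp at hp
  | cons a p ih =>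
    cases p with
    | nil =>
      obtain rfl : a = w := by simpa using hp
      simp [pathCost]
    | cons b p =>
      rw [List.getLast?_cons_cons] at hp
      simp only [List.cons_append, pathCost_cons_cons] at ih ⊢
      rw [ih hp]
      ring

lemma IsPath.append {p l : List V} {u v w : V} (hp : IsPath E p u v)
    (hl : IsPath E (v :: l) v w) : IsPath E (p ++ l) u w := by
  obtain ⟨hne, hhead, hlast, hchain⟩ := hp
  obtain ⟨-, -, hlast', hchain'⟩ := hl
  refine ⟨by simp [hne], ?_, ?_, ?_⟩
  · rw [List.head?_append, hhead, Option.some_or]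
  · rw [List.getLast?_append, hlast, ← hlast', List.getLast?_cons]
    cases l.getLast? <;> rfl
  · refine List.IsChain.append hchain (List.isChain_cons.mp hchain').2 ?_
    intro x hx y hy
    obtain rfl : x = v := by simpa [hlast, eq_comm] using hx
    exact (List.isChain_cons.mp hchain').1 y hy

lemma IsShortestPath.of_append {p l : List V} {u v w : V}
    (h : IsShortestPath E c (p ++ l) u w) (hp : IsPath E p u v)
    (hl : IsPath E (v :: l) v w) : IsShortestPath E c p u v := by
  refine ⟨hp, fun q hq => ?_⟩
  have hle := h.2 _ (hq.append hl)
  rw [pathCost_append c hp.2.2.1, pathCost_append c hq.2.2.1] at hle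
  linarith

namespace SuccSPT

variable (F : SuccSPT E c t)

lemma pathFrom_eq_cons (v : V) : F.pathFrom v = v :: (F.pathFrom v).tail :=
  (List.cons_head?_tail (F.shortest v).1.2.1).symm

lemma pathFrom_eq_append {r : List V} (hr : r.IsChain fun x y => x ≠ t ∧ F.f x = y)
    {u w : V} (hu : r.head? = some u) (hw : r.getLast? = some w) :
    F.pathFrom u = r ++ (F.pathFrom w).tail := by
  induction r generalizing u with
  | nil => simp at hu
  | cons a r ih =>
    obtain rfl : a = u := by simpa using hu
    cases r with
    | nil =>
      obtain rfl : a = w := by simpa using hw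
      exact F.pathFrom_eq_cons a
    | cons b r =>
      obtain ⟨⟨hat, rfl⟩, hr⟩ := List.isChain_cons_cons.mp hr
      rw [List.getLast?_cons_cons] at hw
      rw [F.pathFrom_step a hat, ih hr rfl hw]
      rfl

end SuccSPT

theorem rpc_is_shortest_path_general
    {E : V → V → Prop} {c : V → V → ℝ} {s t : V}
    (B : PredSPT E c s) (F : SuccSPT E c t)
    (r : List V) (hr : IsRPC B F r) (u w : V)
    (hu : r.head? = some u) (hw : r.getLast? = some w) :
    IsShortestPath E c r u w := by
  have hchain : r.IsChain fun x y => x ≠ t ∧ F.f x = y :=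
    List.IsChain.imp (fun _ _ h => ⟨h.2.1, h.2.2.2⟩) hr.2
  have hpath : IsPath E r u w :=
    ⟨hr.1, hu, hw, hchain.imp fun x _ ⟨hxt, hf⟩ => hf ▸ F.edge x hxt⟩
  have htail : IsPath E (w :: (F.pathFrom w).tail) w t :=
    F.pathFrom_eq_cons w ▸ (F.shortest w).1
  exact (F.pathFrom_eq_append hchain hu hw ▸ F.shortest u).of_append hpath htail

/-- A reciprocal pointer chain `(v_1, …, v_n)` is itself a path in
`G` from `v_1` to `v_n`, and it is a shortest path from `v_1` to `v_n`. -/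
theorem rpc_is_shortest_path [Fintype V] [DecidableEq V]
    {E : V → V → Prop} {c : V → V → ℝ} {s t : V}
    (hc : ∀ u w, E u w → 0 ≤ c u w)
    (B : PredSPT E c s) (F : SuccSPT E c t)
    (r : List V) (hr : IsRPC B F r) (u w : V)
    (hu : r.head? = some u) (hw : r.getLast? = some w) :
    IsShortestPath E c r u w :=
  rpc_is_shortest_path_general B F r hr u w hu hw
end

section
/- A reciprocal pointer chain cannot contain a loop: if (v_1,…,v_n) is an RPC, then all of the vertices v_1,…,v_n are pairwise distinct. -/
variable {V : Type*}

variable {E : V → V → Prop} {c : V → V → ℝ} {s t : V}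

namespace PredSPT

theorem length_pathTo_b_lt (B : PredSPT E c s) {v : V} (hv : v ≠ s) :
    (B.pathTo (B.b v)).length < (B.pathTo v).length := by
  simp [B.pathTo_step v hv]

end PredSPT

theorem IsRPC.isChain_length_pathTo {B : PredSPT E c s} {F : SuccSPT E c t} {r : List V}
    (hr : IsRPC B F r) : r.IsChain fun x y => (B.pathTo x).length < (B.pathTo y).length :=
  hr.2.imp fun _ _ ⟨hy, _, hb, _⟩ => hb ▸ B.length_pathTo_b_lt hy

theorem rpc_nodup_general
    {E : V → V → Prop} {c : V → V → ℝ} {s t : V}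
    (B : PredSPT E c s) (F : SuccSPT E c t)
    (r : List V) (hr : IsRPC B F r) :
    r.Nodup :=
  have hdepth : (r.map fun v => (B.pathTo v).length).IsChain (· < ·) :=
    (List.isChain_map _).mpr hr.isChain_length_pathTo
  hdepth.pairwise.nodup.of_map _

/-- A reciprocal pointer chain cannot contain a loop: all of its
vertices are pairwise distinct. -/
theorem rpc_nodup [Fintype V] [DecidableEq V]
    {E : V → V → Prop} {c : V → V → ℝ} {s t : V}
    (hc : ∀ u w, E u w → 0 ≤ c u w)
    (B : PredSPT E c s) (F : SuccSPT E c t)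
    (r : List V) (hr : IsRPC B F r) :
    r.Nodup :=
  rpc_nodup_general B F r hr
end

section
/- (Maximal RPC disjointness theorem) If R_1 and R_2 are maximal reciprocal pointer chains whose vertex sets are not equal, then their vertex sets are disjoint. -/
/-! Both pointer maps are functions: `f` forward and `b` backward. So two RPCs through a common
vertex follow the same `f`-orbit after it and the same `b`-orbit before it; on each side one of
them extends the other, and gluing the longer sides gives an RPC containing both. Maximality then
forces both vertex sets to equal its vertex set. -/

variable {V : Type*}

variable {E : V → V → Prop} {c : V → V → ℝ} {s t : V}

namespace List

variable {α : Type*} {R : α → α → Prop} {a : α} {l₁ l₂ : List α}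

theorem IsChain.prefix_or_prefix_of_cons (hR : Relator.RightUnique R) :
    ∀ {a : α} {l₁ l₂ : List α}, (a :: l₁).IsChain R → (a :: l₂).IsChain R →
      l₁ <+: l₂ ∨ l₂ <+: l₁
  | _, [], _, _, _ => .inl nil_prefix
  | _, _, [], _, _ => .inr nil_prefix
  | _, _ :: _, _ :: _, h₁, h₂ => by
      rw [isChain_cons_cons] at h₁ h₂
      obtain rfl := hR h₁.1 h₂.1
      simpa only [cons_prefix_cons, true_and] using prefix_or_prefix_of_cons hR h₁.2 h₂.2

theorem IsChain.suffix_or_suffix_of_concat (hR : Relator.LeftUnique R)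
    (h₁ : (l₁ ++ [a]).IsChain R) (h₂ : (l₂ ++ [a]).IsChain R) : l₁ <:+ l₂ ∨ l₂ <:+ l₁ := by
  rw [← isChain_reverse, reverse_concat] at h₁ h₂
  simpa only [reverse_prefix] using prefix_or_prefix_of_cons hR.flip h₁ h₂

theorem IsChain.exists_superset_of_mem_of_mem (hR : Relator.BiUnique R)
    (h₁ : l₁.IsChain R) (h₂ : l₂.IsChain R) (ha₁ : a ∈ l₁) (ha₂ : a ∈ l₂) :
    ∃ l, l.IsChain R ∧ l₁ ⊆ l ∧ l₂ ⊆ l := by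
  obtain ⟨p₁, q₁, rfl⟩ := append_of_mem ha₁
  obtain ⟨p₂, q₂, rfl⟩ := append_of_mem ha₂
  rw [isChain_split] at h₁ h₂
  obtain ⟨p, hp, hp₁, hp₂⟩ : ∃ p, (p ++ [a]).IsChain R ∧ p₁ <:+ p ∧ p₂ <:+ p := by
    rcases suffix_or_suffix_of_concat hR.1 h₁.1 h₂.1 with h | h
    exacts [⟨p₂, h₂.1, h, suffix_rfl⟩, ⟨p₁, h₁.1, suffix_rfl, h⟩]
  obtain ⟨q, hq, hq₁, hq₂⟩ : ∃ q, (a :: q).IsChain R ∧ q₁ <+: q ∧ q₂ <+: q := by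
    rcases prefix_or_prefix_of_cons hR.2 h₁.2 h₂.2 with h | h
    exacts [⟨q₂, h₂.2, h, prefix_rfl⟩, ⟨q₁, h₁.2, prefix_rfl, h⟩]
  refine ⟨p ++ a :: q, isChain_split.2 ⟨hp, hq⟩, ?_, ?_⟩ <;> grind

end List

theorem IsRPC.exists_superset_of_mem_of_mem {B : PredSPT E c s} {F : SuccSPT E c t}
    {r₁ r₂ : List V} {v : V} (h₁ : IsRPC B F r₁) (h₂ : IsRPC B F r₂) (hv₁ : v ∈ r₁)
    (hv₂ : v ∈ r₂) : ∃ r, IsRPC B F r ∧ r₁ ⊆ r ∧ r₂ ⊆ r := by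
  obtain ⟨r, hr, hsub₁, hsub₂⟩ := h₁.2.exists_superset_of_mem_of_mem
    ⟨fun _ _ _ hx hy => hx.2.2.1.symm.trans hy.2.2.1,
      fun _ _ _ hx hy => hx.2.2.2.symm.trans hy.2.2.2⟩ h₂.2 hv₁ hv₂
  exact ⟨r, ⟨List.ne_nil_of_mem (hsub₁ hv₁), hr⟩, hsub₁, hsub₂⟩

theorem maximal_rpc_disjoint_general [DecidableEq V]
    {E : V → V → Prop} {c : V → V → ℝ} {s t : V}
    (B : PredSPT E c s) (F : SuccSPT E c t)
    (R₁ R₂ : List V) (h₁ : IsMaximalRPC B F R₁) (h₂ : IsMaximalRPC B F R₂)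
    (hne : R₁.toFinset ≠ R₂.toFinset) :
    Disjoint R₁.toFinset R₂.toFinset := by
  rw [Finset.disjoint_left]
  intro v hv₁ hv₂
  rw [List.mem_toFinset] at hv₁ hv₂
  obtain ⟨r, hr, hsub₁, hsub₂⟩ := h₁.1.exists_superset_of_mem_of_mem h₂.1 hv₁ hv₂
  have hr₁ := h₁.2 r hr (Multiset.toFinset_subset.2 hsub₁)
  have hr₂ := h₂.2 r hr (Multiset.toFinset_subset.2 hsub₂)
  exact hne (hr₁.symm.trans hr₂)

/-- Maximal RPC disjointness theorem: maximal RPCs with unequal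
vertex sets have disjoint vertex sets. -/
theorem maximal_rpc_disjoint [Fintype V] [DecidableEq V]
    {E : V → V → Prop} {c : V → V → ℝ} {s t : V}
    (hc : ∀ u w, E u w → 0 ≤ c u w)
    (B : PredSPT E c s) (F : SuccSPT E c t)
    (R₁ R₂ : List V) (h₁ : IsMaximalRPC B F R₁) (h₂ : IsMaximalRPC B F R₂)
    (hne : R₁.toFinset ≠ R₂.toFinset) :
    Disjoint R₁.toFinset R₂.toFinset :=
  maximal_rpc_disjoint_general B F R₁ R₂ h₁ h₂ hne
end

section
/- (Maximal RPC uniqueness theorem) Every vertex v ∈ V is a member of exactly one maximal reciprocal pointer chain: there exists a maximal RPC containing v, and any two maximal RPCs containing v have the same vertex set. -/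
variable {V : Type*}

variable {E : V → V → Prop} {c : V → V → ℝ} {s t : V}

/-!
Consecutive vertices of an RPC are linked by the relation `b y = x ∧ f x = y`, which is
functional in both directions (`b` and `f` are maps) and strictly increases the length of
the tree path `p̃_{s,·}`. Its connected components are therefore simple chains: walking back
from `v` as far as possible and then forward as far as possible gives an RPC whose vertices
are exactly those related to `v`, and every RPC through `v` lies inside it.
-/

namespace Relation

variable {α : Type*} {r : α → α → Prop} {a b c : α}

theorem ReflTransGen.eq_of_forall_not_rel (h : ReflTransGen r a b) (ha : ∀ c, ¬ r a c) :
    b = a := by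
  rcases h.cases_head with rfl | ⟨c, hac, -⟩
  · rfl
  · exact absurd hac (ha c)

theorem ReflTransGen.eq_of_forall_not_rel_left (h : ReflTransGen r a b) (hb : ∀ c, ¬ r c b) :
    a = b :=
  (reflTransGen_swap.mpr h).eq_of_forall_not_rel hb

theorem ReflTransGen.total_of_left_unique (U : Relator.LeftUnique r) (ba : ReflTransGen r b a)
    (ca : ReflTransGen r c a) : ReflTransGen r b c ∨ ReflTransGen r c b := by
  rcases ReflTransGen.total_of_right_unique (r := Function.swap r) (fun _ _ _ h₁ h₂ => U h₁ h₂)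
    (reflTransGen_swap.mpr ba) (reflTransGen_swap.mpr ca) with h | h
  · exact Or.inr (reflTransGen_swap.mp h)
  · exact Or.inl (reflTransGen_swap.mp h)

section Rank

variable [Finite α] {β : Type*} [LinearOrder β] (rank : α → β)
  (hrank : ∀ x y, r x y → rank x < rank y)
include hrank

theorem exists_reflTransGen_forall_not_rel (a : α) :
    ∃ b, ReflTransGen r a b ∧ ∀ c, ¬ r b c := by
  obtain ⟨b, hab, hmax⟩ :=
    Set.exists_max_image {b | ReflTransGen r a b} rank (Set.toFinite _) ⟨a, .refl⟩
  exact ⟨b, hab, fun c hbc => (hrank b c hbc).not_ge (hmax c (hab.tail hbc))⟩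

theorem exists_reflTransGen_forall_not_rel_left (a : α) :
    ∃ b, ReflTransGen r b a ∧ ∀ c, ¬ r c b := by
  obtain ⟨b, hab, hb⟩ := exists_reflTransGen_forall_not_rel (r := Function.swap r)
    (OrderDual.toDual ∘ rank) (fun x y h => hrank y x h) a
  exact ⟨b, reflTransGen_swap.mp hab, hb⟩

end Rank

end Relation

namespace List

open Relation

variable {α : Type*} {r : α → α → Prop}

theorem IsChain.reflTransGen_or_reflTransGen {l : List α} (hl : l.IsChain r) {x y : α}
    (hx : x ∈ l) (hy : y ∈ l) : ReflTransGen r x y ∨ ReflTransGen r y x :=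
  have hp : l.Pairwise (ReflTransGen r) := (hl.imp fun _ _ => ReflTransGen.single).pairwise
  Pairwise.forall_of_forall_of_flip (R := fun x y => ReflTransGen r x y ∨ ReflTransGen r y x)
    (fun _ _ => Or.inl .refl) (hp.imp Or.inl) (hp.imp Or.inr) hx hy

theorem mem_of_isChain_cons_of_reflTransGen (U : Relator.RightUnique r) {a u : α} {l : List α}
    (hl : (a :: l).IsChain r) (hlast : ∀ c, ¬ r ((a :: l).getLast (cons_ne_nil a l)) c)
    (hu : ReflTransGen r a u) : u ∈ a :: l := by
  induction l generalizing a with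
  | nil => simp [hu.eq_of_forall_not_rel hlast]
  | cons b l ih =>
    rcases hu.cases_head with rfl | ⟨c, hac, hcu⟩
    · exact mem_cons_self
    · obtain ⟨hab, hbl⟩ := isChain_cons_cons.mp hl
      obtain rfl := U hac hab
      exact mem_cons_of_mem _ (ih hbl hlast hcu)

end List

namespace Relation

variable {α : Type*} {r : α → α → Prop}

theorem exists_isChain_mem_iff [Finite α] {β : Type*} [LinearOrder β] (rank : α → β)
    (hrank : ∀ x y, r x y → rank x < rank y) (UL : Relator.LeftUnique r)
    (UR : Relator.RightUnique r) (v : α) :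
    ∃ l : List α, l ≠ [] ∧ l.IsChain r ∧
      ∀ u, u ∈ l ↔ ReflTransGen r u v ∨ ReflTransGen r v u := by
  obtain ⟨h, hhv, hhead⟩ := exists_reflTransGen_forall_not_rel_left rank hrank v
  obtain ⟨e, hhe, hend⟩ := exists_reflTransGen_forall_not_rel rank hrank h
  obtain ⟨l, hchain, hlast⟩ := List.exists_isChain_cons_of_relationReflTransGen hhe
  have hmem : ∀ u, ReflTransGen r h u → u ∈ h :: l :=
    fun u => List.mem_of_isChain_cons_of_reflTransGen UR hchain (hlast ▸ hend)
  refine ⟨h :: l, List.cons_ne_nil _ _, hchain, fun u => ⟨fun hu =>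
    hchain.reflTransGen_or_reflTransGen hu (hmem v hhv), ?_⟩⟩
  rintro (huv | hvu)
  · rcases huv.total_of_left_unique UL hhv with huh | hhu
    · rw [huh.eq_of_forall_not_rel_left hhead]
      exact List.mem_cons_self
    · exact hmem u hhu
  · exact hmem u (hhv.trans hvu)

end Relation

theorem PredSPT.length_pathTo_lt (B : PredSPT E c s) {v : V} (hv : v ≠ s) :
    (B.pathTo (B.b v)).length < (B.pathTo v).length := by
  simp [B.pathTo_step v hv]

section RPC

open Relation

variable (B : PredSPT E c s) (F : SuccSPT E c t)

def RPCStep (x y : V) : Prop :=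
  y ≠ s ∧ x ≠ t ∧ B.b y = x ∧ F.f x = y

theorem rpcStep_leftUnique : Relator.LeftUnique (RPCStep B F) :=
  fun _ _ _ h₁ h₂ => h₁.2.2.1.symm.trans h₂.2.2.1

theorem rpcStep_rightUnique : Relator.RightUnique (RPCStep B F) :=
  fun _ _ _ h₁ h₂ => h₁.2.2.2.symm.trans h₂.2.2.2

theorem exists_isRPC_mem_iff [Finite V] (v : V) :
    ∃ r, IsRPC B F r ∧
      ∀ u, u ∈ r ↔ ReflTransGen (RPCStep B F) u v ∨ ReflTransGen (RPCStep B F) v u := by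
  obtain ⟨r, hne, hchain, hmem⟩ := exists_isChain_mem_iff (fun u => (B.pathTo u).length)
    (fun x y h => h.2.2.1 ▸ B.length_pathTo_lt h.1) (rpcStep_leftUnique B F)
    (rpcStep_rightUnique B F) v
  exact ⟨r, ⟨hne, hchain⟩, hmem⟩

end RPC

theorem maximal_rpc_unique_general [Fintype V] [DecidableEq V]
    {E : V → V → Prop} {c : V → V → ℝ} {s t : V}
    (B : PredSPT E c s) (F : SuccSPT E c t) (v : V) :
    (∃ r, IsMaximalRPC B F r ∧ v ∈ r) ∧
    ∀ r₁ r₂, IsMaximalRPC B F r₁ → IsMaximalRPC B F r₂ → v ∈ r₁ → v ∈ r₂ →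
      r₁.toFinset = r₂.toFinset := by
  obtain ⟨r₀, hr₀, hmem₀⟩ := exists_isRPC_mem_iff B F v
  have hv₀ : v ∈ r₀ := (hmem₀ v).2 (Or.inl .refl)
  have hsub : ∀ r, IsRPC B F r → v ∈ r → r.toFinset ⊆ r₀.toFinset := fun r hr hv u hu =>
    List.mem_toFinset.2 <| (hmem₀ u).2 <|
      hr.2.reflTransGen_or_reflTransGen (List.mem_toFinset.1 hu) hv
  have hmax₀ : ∀ r, IsMaximalRPC B F r → v ∈ r → r₀.toFinset = r.toFinset :=
    fun r hr hv => hr.2 r₀ hr₀ (hsub r hr.1 hv)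
  refine ⟨⟨r₀, ⟨hr₀, fun r hr h₀ => ?_⟩, hv₀⟩, fun r₁ r₂ h₁ h₂ hv₁ hv₂ => ?_⟩
  · have hv : v ∈ r := List.mem_toFinset.1 (h₀ (List.mem_toFinset.2 hv₀))
    exact (hsub r hr hv).antisymm h₀
  · rw [← hmax₀ r₁ h₁ hv₁, hmax₀ r₂ h₂ hv₂]

/-- Maximal RPC uniqueness theorem: every vertex is a member of
exactly one maximal RPC: some maximal RPC contains it, and any two maximal RPCs
containing it have the same vertex set. -/
theorem maximal_rpc_unique [Fintype V] [DecidableEq V]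
    {E : V → V → Prop} {c : V → V → ℝ} {s t : V}
    (hc : ∀ u w, E u w → 0 ≤ c u w)
    (B : PredSPT E c s) (F : SuccSPT E c t) (v : V) :
    (∃ r, IsMaximalRPC B F r ∧ v ∈ r) ∧
    ∀ r₁ r₂, IsMaximalRPC B F r₁ → IsMaximalRPC B F r₂ → v ∈ r₁ → v ∈ r₂ →
      r₁.toFinset = r₂.toFinset :=
  maximal_rpc_unique_general B F v
end

section
/- The map sending each maximal reciprocal pointer chain R to the common cascading via-path p̃_{s,v,t} of its member vertices v is well defined (all vertices of R have the same CVP) and is a bijection from the set Π of maximal RPCs (identified by their vertex sets) onto the set Λ of distinct cascading via-paths. -/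
variable {V : Type*}

variable {E : V → V → Prop} {c : V → V → ℝ} {s t : V}

/-!
Along the CVP `p̃_{s,u} ++ p̃_{u,t}` the vertex `u` sits at position `|p̃_{s,u}|`, and the prefix
of the CVP ending at `u` is the tree path to `u`. Tree paths are closed under nonempty prefixes, so
if `v` shares the CVP and sits further along it, the prefix one step past `u` is the tree path to
`f u`; that is, `b (f u) = u`. Hence the vertices with a given CVP form a single RPC, ordered by
depth, while every RPC lies inside one such class. The maximal RPCs are therefore exactly these
classes, which correspond one-to-one to the distinct CVPs.
-/

namespace PredSPT

variable (B : PredSPT E c s)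

lemma getLast?_pathTo (v : V) : (B.pathTo v).getLast? = some v := (B.shortest v).1.2.2.1

lemma pathTo_injective : Function.Injective B.pathTo := fun u v h =>
  Option.some_injective _ <| by rw [← B.getLast?_pathTo, h, B.getLast?_pathTo]

lemma ne_src_and_b_eq_of_pathTo_eq_append {u z : V} (h : B.pathTo z = B.pathTo u ++ [z]) :
    z ≠ s ∧ B.b z = u := by
  have hz : z ≠ s := by
    rintro rfl
    have := congrArg List.length h
    simp only [B.pathTo_src, List.length_singleton, List.length_append] at this
    have := List.length_pos_iff.2 (B.shortest u).1.1
    omega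
  refine ⟨hz, B.pathTo_injective ?_⟩
  rw [B.pathTo_step z hz] at h
  exact List.append_cancel_right h

lemma exists_pathTo_eq_take (y : V) {k : ℕ} (hk : 1 ≤ k) (hky : k ≤ (B.pathTo y).length) :
    ∃ z, B.pathTo z = (B.pathTo y).take k := by
  obtain ⟨m, hm⟩ : ∃ m, (B.pathTo y).length = k + m := ⟨_, (Nat.add_sub_cancel' hky).symm⟩
  induction m generalizing y with
  | zero => exact ⟨y, (List.take_of_length_le (by omega)).symm⟩
  | succ m ih =>
    have hy : y ≠ s := by
      rintro rfl
      simp only [B.pathTo_src, List.length_singleton] at hm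
      omega
    have hstep := B.pathTo_step y hy
    have hlen : (B.pathTo (B.b y)).length = k + m := by
      rw [hstep, List.length_append, List.length_singleton] at hm
      omega
    obtain ⟨z, hz⟩ := ih (B.b y) (by omega) hlen
    exact ⟨z, by rw [hz, hstep, List.take_append_of_le_length (by omega)]⟩

end PredSPT

lemma SuccSPT.pathFrom_eq_cons_tail (F : SuccSPT E c t) (v : V) :
    F.pathFrom v = v :: (F.pathFrom v).tail := by
  obtain ⟨l, hl⟩ := List.head?_eq_some_iff.1 (F.shortest v).1.2.1
  rw [hl, List.tail_cons]

section CVP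

variable {B : PredSPT E c s} {F : SuccSPT E c t}

lemma take_cvp (v : V) : (CVP B F v).take (B.pathTo v).length = B.pathTo v :=
  List.take_left

lemma cvp_eq_append_pathFrom_f {u : V} (hu : u ≠ t) :
    CVP B F u = B.pathTo u ++ F.pathFrom (F.f u) := by
  rw [CVP, F.pathFrom_step u hu, List.tail_cons]

lemma eq_of_cvp_eq_of_length_pathTo_eq {u v : V} (h : CVP B F u = CVP B F v)
    (hl : (B.pathTo u).length = (B.pathTo v).length) : u = v :=
  B.pathTo_injective <| by rw [← take_cvp u, ← take_cvp v, h, hl]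

variable (B F) in
def RPCLink (x y : V) : Prop :=
  y ≠ s ∧ x ≠ t ∧ B.b y = x ∧ F.f x = y

lemma cvp_eq_of_rpcLink {x y : V} (h : RPCLink B F x y) : CVP B F x = CVP B F y := by
  obtain ⟨hy, hx, hb, hf⟩ := h
  rw [cvp_eq_append_pathFrom_f hx, CVP, B.pathTo_step y hy, hb, hf, List.append_assoc,
    List.singleton_append, ← F.pathFrom_eq_cons_tail]

lemma length_pathTo_of_rpcLink {x y : V} (h : RPCLink B F x y) :
    (B.pathTo y).length = (B.pathTo x).length + 1 := by
  rw [B.pathTo_step y h.1, h.2.2.1, List.length_append, List.length_singleton]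

lemma IsRPC.cvp_eq {r : List V} (hr : IsRPC B F r) {u v : V} (hu : u ∈ r) (hv : v ∈ r) :
    CVP B F u = CVP B F v := by
  let R : V → V → Prop := fun x y => CVP B F x = CVP B F y
  have : Trans R R R := ⟨Eq.trans⟩
  have : Std.Symm R := ⟨fun _ _ => Eq.symm⟩
  have hpair : r.Pairwise R :=
    List.isChain_iff_pairwise.1 (hr.2.imp fun _ _ h => cvp_eq_of_rpcLink h)
  by_cases huv : u = v
  · rw [huv]
  · exact hpair.forall hu hv huv

lemma rpcLink_f_of_cvp_eq {u v : V} (h : CVP B F u = CVP B F v)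
    (hlt : (B.pathTo u).length < (B.pathTo v).length) : RPCLink B F u (F.f u) := by
  have hv : (B.pathTo v).length ≤ (CVP B F u).length := by
    rw [h, CVP, List.length_append]
    omega
  have hu : u ≠ t := by
    rintro rfl
    rw [CVP, F.pathFrom_tgt, List.tail_cons, List.append_nil] at hv
    omega
  have hprefix : (B.pathTo v).take ((B.pathTo u).length + 1) = B.pathTo u ++ [F.f u] := by
    rw [← take_cvp (F := F) v, ← h, List.take_take, min_eq_left (by omega),
      cvp_eq_append_pathFrom_f hu, List.take_length_add_append, List.take_one,
      F.pathFrom_eq_cons_tail, List.head?_cons, Option.toList_some]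
  obtain ⟨z, hz⟩ :=
    B.exists_pathTo_eq_take v (k := (B.pathTo u).length + 1) (by omega) (by omega)
  rw [hprefix] at hz
  have hzf : z = F.f u := by
    simpa [B.getLast?_pathTo] using congrArg List.getLast? hz
  subst hzf
  obtain ⟨hs, hb⟩ := B.ne_src_and_b_eq_of_pathTo_eq_append hz
  exact ⟨hs, hu, hb, rfl⟩

lemma exists_isChain_cover (n : ℕ) : ∀ u v : V, CVP B F u = CVP B F v →
    (B.pathTo v).length = (B.pathTo u).length + n →
    ∃ l, (u :: l).IsChain (RPCLink B F) ∧ ∀ x, CVP B F x = CVP B F u →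
      (B.pathTo u).length ≤ (B.pathTo x).length →
      (B.pathTo x).length ≤ (B.pathTo v).length → x ∈ u :: l := by
  induction n with
  | zero =>
    refine fun u v _ hd => ⟨[], List.isChain_singleton u, fun x hx hux hxv => ?_⟩
    rw [eq_of_cvp_eq_of_length_pathTo_eq hx (by omega)]
    exact List.mem_singleton_self u
  | succ n ih =>
    intro u v h hd
    have hlink := rpcLink_f_of_cvp_eq h (by omega)
    have hcvp := cvp_eq_of_rpcLink hlink
    have hlen := length_pathTo_of_rpcLink hlink
    obtain ⟨l, hl, hcover⟩ := ih (F.f u) v (hcvp.symm.trans h) (by omega)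
    refine ⟨F.f u :: l, List.isChain_cons_cons.2 ⟨hlink, hl⟩, fun x hx hux hxv => ?_⟩
    rcases hux.eq_or_lt with hux | hux
    · rw [eq_of_cvp_eq_of_length_pathTo_eq hx hux.symm]
      exact List.mem_cons_self
    · exact List.mem_cons_of_mem u (hcover x (hx.trans hcvp) (by omega) hxv)

variable [Fintype V] [DecidableEq V]

variable (B F) in
def cvpClass (v : V) : Finset V := {x | CVP B F x = CVP B F v}

@[simp]
lemma mem_cvpClass {x v : V} : x ∈ cvpClass B F v ↔ CVP B F x = CVP B F v := by
  simp [cvpClass]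

lemma cvpClass_congr {u v : V} (h : CVP B F u = CVP B F v) :
    cvpClass B F u = cvpClass B F v := by
  simp only [cvpClass, h]

lemma IsRPC.toFinset_subset_cvpClass {r : List V} (hr : IsRPC B F r) {v : V} (hv : v ∈ r) :
    r.toFinset ⊆ cvpClass B F v := fun x hx => by
  simpa using hr.cvp_eq (List.mem_toFinset.1 hx) hv

variable (B F) in
lemma exists_isRPC_toFinset_eq_cvpClass (v : V) :
    ∃ r, IsRPC B F r ∧ r.toFinset = cvpClass B F v := by
  have hne : (cvpClass B F v).Nonempty := ⟨v, mem_cvpClass.2 rfl⟩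
  obtain ⟨u, hu, hmin⟩ := (cvpClass B F v).exists_min_image (fun x => (B.pathTo x).length) hne
  obtain ⟨w, hw, hmax⟩ := (cvpClass B F v).exists_max_image (fun x => (B.pathTo x).length) hne
  simp only [mem_cvpClass] at hu hw hmin hmax
  obtain ⟨l, hl, hcover⟩ := exists_isChain_cover _ u w (hu.trans hw.symm)
    (Nat.add_sub_cancel' (hmin w hw)).symm
  have hr : IsRPC B F (u :: l) := ⟨List.cons_ne_nil u l, hl⟩
  refine ⟨u :: l, hr, subset_antisymm ?_ fun x hx => ?_⟩
  · exact cvpClass_congr hu ▸ hr.toFinset_subset_cvpClass List.mem_cons_self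
  · rw [mem_cvpClass] at hx
    exact List.mem_toFinset.2 (hcover x (hx.trans hu.symm) (hmin x hx) (hmax x hx))

lemma IsMaximalRPC.toFinset_eq_cvpClass {r : List V} (hr : IsMaximalRPC B F r) {v : V}
    (hv : v ∈ r) : r.toFinset = cvpClass B F v := by
  obtain ⟨r', hr', hr'v⟩ := exists_isRPC_toFinset_eq_cvpClass B F v
  rw [← hr'v, hr.2 r' hr' (hr'v ▸ hr.1.toFinset_subset_cvpClass hv)]

variable (B F) in
lemma exists_isMaximalRPC_toFinset_eq_cvpClass (v : V) :
    ∃ r, IsMaximalRPC B F r ∧ r.toFinset = cvpClass B F v := by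
  obtain ⟨r, hr, hrv⟩ := exists_isRPC_toFinset_eq_cvpClass B F v
  refine ⟨r, ⟨hr, fun r' hr' hsub => subset_antisymm ?_ hsub⟩, hrv⟩
  have hv : v ∈ r' := List.mem_toFinset.1 (hsub (hrv ▸ mem_cvpClass.2 rfl))
  exact hrv ▸ hr'.toFinset_subset_cvpClass hv

end CVP

theorem maximal_rpc_cvp_bijection_general [Fintype V] [DecidableEq V]
    {E : V → V → Prop} {c : V → V → ℝ} {s t : V}
    (B : PredSPT E c s) (F : SuccSPT E c t) :
    (∀ r, IsMaximalRPC B F r → ∀ u ∈ r, ∀ v ∈ r, CVP B F u = CVP B F v) ∧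
    ∃ g : Finset V → List V,
      (∀ r, IsMaximalRPC B F r → ∀ v ∈ r, g r.toFinset = CVP B F v) ∧
      Set.BijOn g {S | ∃ r, IsMaximalRPC B F r ∧ S = r.toFinset}
        {p | ∃ v, p = CVP B F v} := by
  have hcvp : ∀ r, IsMaximalRPC B F r → ∀ u ∈ r, ∀ v ∈ r, CVP B F u = CVP B F v :=
    fun r hr u hu v hv => hr.1.cvp_eq hu hv
  let g : Finset V → List V := fun S => if h : S.Nonempty then CVP B F h.choose else []
  have hg : ∀ r, IsMaximalRPC B F r → ∀ v ∈ r, g r.toFinset = CVP B F v := by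
    intro r hr v hv
    have hne : r.toFinset.Nonempty := ⟨v, List.mem_toFinset.2 hv⟩
    simp only [g, dif_pos hne]
    exact hcvp r hr _ (List.mem_toFinset.1 hne.choose_spec) v hv
  refine ⟨hcvp, g, hg, ?_, ?_, ?_⟩
  · rintro _ ⟨r, hr, rfl⟩
    obtain ⟨v, hv⟩ := List.exists_mem_of_ne_nil r hr.1.1
    exact ⟨v, hg r hr v hv⟩
  · rintro _ ⟨r₁, hr₁, rfl⟩ _ ⟨r₂, hr₂, rfl⟩ hg₁₂
    obtain ⟨v₁, hv₁⟩ := List.exists_mem_of_ne_nil r₁ hr₁.1.1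
    obtain ⟨v₂, hv₂⟩ := List.exists_mem_of_ne_nil r₂ hr₂.1.1
    rw [hg r₁ hr₁ v₁ hv₁, hg r₂ hr₂ v₂ hv₂] at hg₁₂
    rw [hr₁.toFinset_eq_cvpClass hv₁, hr₂.toFinset_eq_cvpClass hv₂, cvpClass_congr hg₁₂]
  · rintro _ ⟨v, rfl⟩
    obtain ⟨r, hr, hrv⟩ := exists_isMaximalRPC_toFinset_eq_cvpClass B F v
    have hv : v ∈ r := List.mem_toFinset.1 (hrv ▸ mem_cvpClass.2 rfl)
    exact ⟨r.toFinset, ⟨r, hr, rfl⟩, hg r hr v hv⟩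

/-- The map sending each maximal RPC (identified by its vertex set)
to the common CVP of its member vertices is well defined and is a bijection from
the set Π of maximal RPC vertex sets onto the set Λ of distinct CVPs. -/
theorem maximal_rpc_cvp_bijection [Fintype V] [DecidableEq V]
    {E : V → V → Prop} {c : V → V → ℝ} {s t : V}
    (hc : ∀ u w, E u w → 0 ≤ c u w)
    (B : PredSPT E c s) (F : SuccSPT E c t) :
    (∀ r, IsMaximalRPC B F r → ∀ u ∈ r, ∀ v ∈ r, CVP B F u = CVP B F v) ∧
    ∃ g : Finset V → List V,
      (∀ r, IsMaximalRPC B F r → ∀ v ∈ r, g r.toFinset = CVP B F v) ∧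
      Set.BijOn g {S | ∃ r, IsMaximalRPC B F r ∧ S = r.toFinset}
        {p | ∃ v, p = CVP B F v} :=
  maximal_rpc_cvp_bijection_general B F
end

section
/- Let p^(1),…,p^(k) be pairwise distinct s–t paths with c(p^(1)) ≤ … ≤ c(p^(k)) such that every s–t path not equal to any p^(i) has cost at least c(p^(k)). If p^(k) contains a vertex v that does not lie on any p^(i) with i < k, then p^(k) is a via-path for v: c(p^(k)) = c(p_{s,v,t}), the minimum cost of an s–t path passing through v. -/
variable {V : Type*}

variable {E : V → V → Prop} {c : V → V → ℝ} {s t : V}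

/-- Let `p^(1), …, p^(k)` be pairwise distinct `s`–`t` paths with
nondecreasing costs such that every other `s`–`t` path has cost at least
`c(p^(k))`. If `p^(k)` contains a vertex `v` lying on no earlier `p^(i)`, then
`p^(k)` is a via-path for `v` (a minimum-cost `s`–`t` path through `v`). -/
theorem kth_shortest_is_via_path
    {E : V → V → Prop} {c : V → V → ℝ} {s t : V}
    (k : ℕ) (hk : 1 ≤ k) (P : Fin k → List V)
    (hpath : ∀ i, IsPath E (P i) s t)
    (hmono : ∀ i j : Fin k, i ≤ j → pathCost c (P i) ≤ pathCost c (P j))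
    (hrest : ∀ q, IsPath E q s t → (∀ i, q ≠ P i) →
      pathCost c (P ⟨k - 1, by omega⟩) ≤ pathCost c q)
    (v : V) (hv : v ∈ P ⟨k - 1, by omega⟩)
    (hvnew : ∀ i : Fin k, (i : ℕ) < k - 1 → v ∉ P i) :
    IsViaPath E c s t v (P ⟨k - 1, by omega⟩) := by
  refine ⟨hpath _, hv, fun q hq hvq => ?_⟩
  by_cases hlisted : ∃ i, q = P i
  · obtain ⟨i, rfl⟩ := hlisted
    have hi : k - 1 ≤ (i : ℕ) := not_lt.mp fun hlt => hvnew i hlt hvq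
    exact hmono _ i (Fin.le_def.mpr hi)
  · exact hrest q hq fun i hi => hlisted ⟨i, hi⟩
end
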